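/- Let B be channel bounds and let w, u ∈ Σ^∞ be channel-compliant words that respect B with w ≈ u. Then for every channel participant ⟨p,q,i⟩, the projections of the encoded words onto the events of ⟨p,q,i⟩ agree: enc(w)|_{Σ_⟨p,q,i⟩} = enc(u)|_{Σ_⟨p,q,i⟩}. -/

import Mathlib

/-!
The events of the channel participant `⟨p,q,i⟩` in `enc(w)` are the receptions of the sends on
`(p,q)` whose index is `≡ i (mod B(p,q))` and the emissions of the receives with such an index.
Channel compliance (the `k`-th receive comes after the `k`-th send) and the bound (the
`(k+B(p,q))`-th send comes after the `k`-th receive) force these to alternate, so the projection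
is determined by the sequences of messages sent and received on `(p,q)`. These sequences are
invariant under `≈`, since no commutation swaps two sends or two receives of one channel, and grow
along `≼`. For infinite words the projection is the limit of the projections of finite prefixes,
and `≼^ω` in both directions makes the two limits equal.
-/

set_option maxHeartbeats 1000000
set_option autoImplicit false

universe u v w

namespace AMP

/-- Events: `send p q m` means participant `p` sends message `m` to `q`;
`recv p q m` means participant `q` receives message `m` that was sent by `p`. -/
inductive Ev (P : Type u) (V : Type v) : Type (max u v) where
  | send : P → P → V → Ev P V
  | recv : P → P → V → Ev P V
deriving DecidableEq

namespace Ev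
variable {P : Type u} {V : Type v}
/-- The events in which participant `r` is active (the alphabet `Σ_r`). -/
def Active (r : P) : Ev P V → Prop
  | .send p _ _ => p = r
  | .recv _ q _ => q = r
end Ev

/-- Finite or infinite words: `Σ^∞ = Σ* ∪ Σ^ω`. -/
abbrev Word (E : Type w) := List E ⊕ (ℕ → E)

namespace Word
variable {E : Type w}
/-- First `n` letters of a word, as a finite list. -/
def take : Word E → ℕ → List E
  | .inl u, n => u.take n
  | .inr f, n => (List.range n).map f
/-- The letter at position `n`, if any. -/
def get? : Word E → ℕ → Option E
  | .inl u, n => u[n]?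
  | .inr f, n => some (f n)
/-- `u` is a (finite) prefix of the word `w`. -/
def IsPref (u : List E) (w : Word E) : Prop := take w u.length = u
/-- Prepend a letter to a word. -/
def cons (a : E) : Word E → Word E
  | .inl u => .inl (a :: u)
  | .inr f => .inr fun n => match n with | 0 => a | k+1 => f k
end Word

/-- `pref L`: the set of finite prefixes of words of `L`. -/
def pref {E : Type w} (L : Set (Word E)) : Set (List E) := {u | ∃ w ∈ L, Word.IsPref u w}

/-- `first(L) = pref(L) ∩ Σ`: first letters of words of `L`. -/
def firstL {E : Type w} (L : Set (Word E)) : Set E := {a | [a] ∈ pref L}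

section Chan
variable {P : Type u} {V : Type v} [DecidableEq P]

/-- Message values of the subword of send events on channel `(p,q)`. -/
def sendMsgs (p q : P) (u : List (Ev P V)) : List V :=
  u.filterMap fun e => match e with
    | .send p' q' m => if p' = p ∧ q' = q then some m else none
    | .recv _ _ _ => none

/-- Message values of the subword of receive events on channel `(p,q)`. -/
def recvMsgs (p q : P) (u : List (Ev P V)) : List V :=
  u.filterMap fun e => match e with
    | .recv p' q' m => if p' = p ∧ q' = q then some m else none
    | .send _ _ _ => none

/-- Position `i` of `w` is a send event matched by a later receive event. -/
def MatchedAt (w : Word (Ev P V)) (i : ℕ) : Prop :=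
  ∃ p q m, Word.get? w i = some (Ev.send p q m) ∧
    ∃ j, i < j ∧ Word.get? w j = some (Ev.recv p q m) ∧
      sendMsgs p q (Word.take w (i+1)) = recvMsgs p q (Word.take w (j+1))

/-- Feasible eventual reception: any unmatched send in a finite prefix of `L`
can be matched in some extension belonging to `L`. -/
def FER (L : Set (Word (Ev P V))) : Prop :=
  ∀ u ∈ pref L, ∀ (i : ℕ) (p q : P) (m : V), u[i]? = some (Ev.send p q m) →
    ¬ MatchedAt (Sum.inl u) i →
    ∃ w ∈ L, Word.IsPref u w ∧ MatchedAt w i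

/-- Channel compliance (FIFO order): on each channel, the sequence of received
messages is a prefix of the sequence of sent messages, in every finite prefix. -/
def ChanCompliant (w : Word (Ev P V)) : Prop :=
  ∀ (n : ℕ) (p q : P), recvMsgs p q (Word.take w n) <+: sendMsgs p q (Word.take w n)

/-- FIFO words: channel compliant, and if finite then all sends are matched. -/
def FIFOw (w : Word (Ev P V)) : Prop :=
  ChanCompliant w ∧
  ∀ u : List (Ev P V), w = Sum.inl u → ∀ p q : P, sendMsgs p q u = recvMsgs p q u

/-- `B`-bounded: at most `B` pending sends per channel, in every finite prefix. -/
def BBnd (B : ℕ) (w : Word (Ev P V)) : Prop :=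
  ∀ (n : ℕ) (p q : P),
    (sendMsgs p q (Word.take w n)).length ≤ (recvMsgs p q (Word.take w n)).length + B

/-- The set `FIFO_B` of `B`-bounded FIFO words. -/
def FIFOB (B : ℕ) : Set (Word (Ev P V)) := {w | FIFOw w ∧ BBnd B w}

/-- `⊕B`-bounded: the total number of pending sends over all channels is at most `B`. -/
def SumBnd [Fintype P] (B : ℕ) (w : Word (Ev P V)) : Prop :=
  ∀ n : ℕ, (∑ p : P, ∑ q : P,
    ((sendMsgs p q (Word.take w n)).length - (recvMsgs p q (Word.take w n)).length)) ≤ B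
end Chan

section Indist
variable {P : Type u} {V : Type v} [DecidableEq P]

/-- One commutation of adjacent independent events. -/
inductive Swap : List (Ev P V) → List (Ev P V) → Prop
  | ss (w u : List (Ev P V)) (p q p' q' : P) (m m' : V) (h : p ≠ p') :
      Swap (w ++ Ev.send p q m :: Ev.send p' q' m' :: u)
           (w ++ Ev.send p' q' m' :: Ev.send p q m :: u)
  | rr (w u : List (Ev P V)) (p q p' q' : P) (m m' : V) (h : q ≠ q') :
      Swap (w ++ Ev.recv p q m :: Ev.recv p' q' m' :: u)
           (w ++ Ev.recv p' q' m' :: Ev.recv p q m :: u)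
  | sr (w u : List (Ev P V)) (p q p' q' : P) (m m' : V)
      (h1 : p ≠ q') (h2 : ¬ (p = p' ∧ q = q')) :
      Swap (w ++ Ev.send p q m :: Ev.recv p' q' m' :: u)
           (w ++ Ev.recv p' q' m' :: Ev.send p q m :: u)
  | srSame (w u : List (Ev P V)) (p q : P) (m m' : V)
      (h : (recvMsgs p q w).length < (sendMsgs p q w).length) :
      Swap (w ++ Ev.send p q m :: Ev.recv p q m' :: u)
           (w ++ Ev.recv p q m' :: Ev.send p q m :: u)

/-- The indistinguishability relation `≈`: smallest equivalence containing `Swap`. -/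
inductive Indist : List (Ev P V) → List (Ev P V) → Prop
  | of {w u} : Swap w u → Indist w u
  | refl (w) : Indist w w
  | symm {w u} : Indist w u → Indist u w
  | trans {w u v} : Indist w u → Indist u v → Indist w v

/-- `u ≼ v` iff `u·w ≈ v` for some finite `w`. -/
def IPref (u v : List (Ev P V)) : Prop := ∃ w, Indist (u ++ w) v

/-- `≼^ω` on infinite words: every finite prefix of `f` is `≼`-below a prefix of `g`. -/
def IPrefW (f g : ℕ → Ev P V) : Prop :=
  ∀ n, ∃ m, IPref ((List.range n).map f) ((List.range m).map g)

/-- The closure `C(L)` under indistinguishability. -/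
def closure (L : Set (Word (Ev P V))) : Set (Word (Ev P V)) :=
  {w' | (∃ u', w' = Sum.inl u' ∧ ∃ u, Sum.inl u ∈ L ∧ Indist u' u) ∨
        (∃ f', w' = Sum.inr f' ∧ ∃ f, Sum.inr f ∈ L ∧ IPrefW f' f)}

/-- Indistinguishability of (finite or infinite) words. -/
def WIndist : Word (Ev P V) → Word (Ev P V) → Prop
  | .inl u, .inl v => Indist u v
  | .inr f, .inr g => IPrefW f g ∧ IPrefW g f
  | _, _ => False
end Indist

/-- Participants enlarged by channel participants `⟨p,q,i⟩`. -/
abbrev PCh (P : Type u) := P ⊕ (P × P × ℕ)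

section Enc
variable {P : Type u} {V : Type v} [DecidableEq P]

/-- Embed an event into the enlarged alphabet. -/
def embedEv : Ev P V → Ev (PCh P) V
  | .send p q m => .send (Sum.inl p) (Sum.inl q) m
  | .recv p q m => .recv (Sum.inl p) (Sum.inl q) m

def upd2 (f : P → P → ℕ) (p q : P) (v : ℕ) : P → P → ℕ :=
  fun a b => if a = p ∧ b = q then v else f a b

/-- Encode a single event, given channel bounds `B` and the numbers `σ p q`
(resp. `ρ p q`) of earlier sends (resp. receives) on each channel: on a channel
in the domain of `B`, the `k`-th send (receive) becomes the paired event through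
channel participant `⟨p,q,k mod B(p,q)⟩`; other events are unchanged. -/
def encEv (B : P → P → Option ℕ) (σ ρ : P → P → ℕ) : Ev P V → List (Ev (PCh P) V)
  | .send p q m =>
      match B p q with
      | some b => [Ev.send (Sum.inl p) (Sum.inr (p, q, σ p q % b)) m,
                   Ev.recv (Sum.inl p) (Sum.inr (p, q, σ p q % b)) m]
      | none => [Ev.send (Sum.inl p) (Sum.inl q) m]
  | .recv p q m =>
      match B p q with
      | some b => [Ev.send (Sum.inr (p, q, ρ p q % b)) (Sum.inl q) m,
                   Ev.recv (Sum.inr (p, q, ρ p q % b)) (Sum.inl q) m]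
      | none => [Ev.recv (Sum.inl p) (Sum.inl q) m]

def bumpS (B : P → P → Option ℕ) (σ : P → P → ℕ) : Ev P V → (P → P → ℕ)
  | .send p q _ => if (B p q).isSome then upd2 σ p q (σ p q + 1) else σ
  | .recv _ _ _ => σ

def bumpR (B : P → P → Option ℕ) (ρ : P → P → ℕ) : Ev P V → (P → P → ℕ)
  | .recv p q _ => if (B p q).isSome then upd2 ρ p q (ρ p q + 1) else ρ
  | .send _ _ _ => ρ

/-- Encoding of finite words, threading the per-channel counters. -/
def encList (B : P → P → Option ℕ) :
    (P → P → ℕ) → (P → P → ℕ) → List (Ev P V) → List (Ev (PCh P) V)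
  | _, _, [] => []
  | σ, ρ, e :: w => encEv B σ ρ e ++ encList B (bumpS B σ e) (bumpR B ρ e) w

/-- The word encoding `enc(w)` (for an infinite word, the `n`-th letter of the
encoding is determined by the encoding of a sufficiently long finite prefix). -/
def encWord (B : P → P → Option ℕ) : Word (Ev P V) → Word (Ev (PCh P) V)
  | .inl u => .inl (encList B (fun _ _ => 0) (fun _ _ => 0) u)
  | .inr f => .inr fun n =>
      (encList B (fun _ _ => 0) (fun _ _ => 0) ((List.range (n+1)).map f)).getD n
        (embedEv (f 0))

/-- A word respects the channel bounds `B`: on every channel in the domain of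
`B`, its projection to that channel is `B(p,q)`-bounded. -/
def RespectsBw (B : P → P → Option ℕ) (w : Word (Ev P V)) : Prop :=
  ∀ p q b, B p q = some b →
    ∀ n : ℕ, (sendMsgs p q (Word.take w n)).length ≤ (recvMsgs p q (Word.take w n)).length + b

end Enc

/-- Projection of a word to the letters satisfying `X` (for an infinite word the
result may be finite or infinite). -/
noncomputable def WProj {E : Type w} (X : E → Prop) : Word E → Word E
  | .inl u => .inl (u.filter fun e => @decide (X e) (Classical.propDecidable _))
  | .inr f =>
      haveI : Decidable ({n | X (f n)}.Infinite) := Classical.propDecidable _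
      if h : {n | X (f n)}.Infinite then .inr fun k => f (Nat.nth (fun n => X (f n)) k)
      else .inl (((Set.not_infinite.mp h).toFinset.sort (· ≤ ·)).map f)

end AMP

theorem List.range_prefix_range {m n : ℕ} (h : m ≤ n) : List.range m <+: List.range n := by
  rw [List.prefix_iff_eq_take, List.length_range, List.take_range, Nat.min_eq_left h]

namespace Nat

theorem filter_range_eq_map_nth (p : ℕ → Prop) [DecidablePred p] (n : ℕ) :
    (List.range n).filter (p ·) = (List.range (count p n)).map (nth p) := by
  induction n with
  | zero => simp
  | succ n ih =>
    by_cases h : p n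
    · simp [List.range_succ, ih, count_succ, h, nth_count h]
    · simp [List.range_succ, ih, count_succ, h]

theorem exists_le_count {p : ℕ → Prop} [DecidablePred p] {j : ℕ}
    (h : ∀ hf : (Set.ofPred p).Finite, j ≤ hf.toFinset.card) :
    ∃ n, j ≤ count p n := by
  rcases j with _ | j
  · exact ⟨0, le_rfl⟩
  · exact ⟨nth p j + 1, (count_nth_succ fun hf => h hf).ge⟩

end Nat

namespace List

variable {α : Type*}

/-- `a₁ b₁ a₂ b₂ …`, stopping at the first missing entry. -/
def alternate : List α → List α → List α
  | [], _ => []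
  | a :: _, [] => [a]
  | a :: l, b :: l' => a :: b :: alternate l l'

theorem alternate_append_singleton_left (a : α) :
    ∀ {l l' : List α}, l.length = l'.length → alternate (l ++ [a]) l' = alternate l l' ++ [a]
  | [], [], _ => rfl
  | _ :: _, [], h | [], _ :: _, h => absurd h (by simp)
  | _ :: l, _ :: l', h => by
    simp only [cons_append, alternate, alternate_append_singleton_left a (l := l) (l' := l')
      (by simpa using h)]

theorem alternate_append_singleton_right (b : α) :
    ∀ {l l' : List α}, l.length = l'.length + 1 →
      alternate l (l' ++ [b]) = alternate l l' ++ [b]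
  | [_], [], _ => rfl
  | [], _, h | _ :: _ :: _, [], h => absurd h (by simp)
  | _ :: l, _ :: l', h => by
    simp only [cons_append, alternate, alternate_append_singleton_right b (l := l) (l' := l')
      (by simpa using h)]

theorem alternate_prefix {l₁ l₂ l₁' l₂' : List α} (h : l₁ <+: l₂) (h' : l₁' <+: l₂') :
    alternate l₁ l₁' <+: alternate l₂ l₂' := by
  induction l₁ generalizing l₂ l₁' l₂' with
  | nil => simp [alternate]
  | cons a l₁ ih =>
    obtain _ | ⟨a', l₂⟩ := l₂
    · exact absurd (eq_nil_of_prefix_nil h) (cons_ne_nil _ _)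
    obtain ⟨rfl, hl⟩ := cons_prefix_cons.1 h
    obtain _ | ⟨b, l₁'⟩ := l₁'
    · cases l₂' <;> simp [alternate]
    obtain _ | ⟨b', l₂'⟩ := l₂'
    · exact absurd (eq_nil_of_prefix_nil h') (cons_ne_nil _ _)
    obtain ⟨rfl, hl'⟩ := cons_prefix_cons.1 h'
    simpa [alternate] using ih hl hl'

def sublistMod (b i k : ℕ) (l : List α) : List α :=
  ((l.zipIdx k).filter fun x => x.2 % b = i).map Prod.fst

@[simp]
theorem sublistMod_nil (b i k : ℕ) : sublistMod b i k ([] : List α) = [] := rfl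

theorem sublistMod_append (b i k : ℕ) (l l' : List α) :
    sublistMod b i k (l ++ l') = sublistMod b i k l ++ sublistMod b i (k + l.length) l' := by
  simp [sublistMod, zipIdx_append]

theorem sublistMod_singleton (b i k : ℕ) (a : α) :
    sublistMod b i k [a] = if k % b = i then [a] else [] := by
  by_cases h : k % b = i <;> simp [sublistMod, h]

theorem sublistMod_prefix (b i k : ℕ) {l l' : List α} (h : l <+: l') :
    sublistMod b i k l <+: sublistMod b i k l' := by
  obtain ⟨t, rfl⟩ := h
  rw [sublistMod_append]
  exact prefix_append _ _

theorem length_sublistMod (b i : ℕ) (l : List α) :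
    (sublistMod b i 0 l).length = Nat.count (· % b = i) l.length := by
  induction l using reverseRecOn with
  | nil => simp [sublistMod]
  | append_singleton l a ih =>
    rw [sublistMod_append, sublistMod_singleton, Nat.zero_add, length_append, ih, length_append,
      length_singleton, Nat.count_succ]
    split_ifs <;> simp

end List

namespace Nat

theorem mod_ne_mod_of_lt_of_lt_add {b k l : ℕ} (hkl : k < l) (hlk : l < k + b) : k % b ≠ l % b :=
  fun h => by
    have := Nat.eq_zero_of_dvd_of_lt ((Nat.modEq_iff_dvd' hkl.le).1 h) (by omega)
    omega

theorem count_mod_eq_of_le_of_lt_add {b i r s : ℕ} (hs : s % b = i) (hrs : r ≤ s)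
    (hsr : s < r + b) : count (· % b = i) s = count (· % b = i) r := by
  obtain ⟨d, rfl⟩ := Nat.exists_eq_add_of_le hrs
  rw [count_add, add_eq_left]
  exact count_of_forall_not fun m hm h =>
    mod_ne_mod_of_lt_of_lt_add (k := r + m) (by omega) (by omega) (h.trans hs.symm)

theorem count_mod_eq_succ_of_lt_of_le_add {b i r s : ℕ} (hr : r % b = i) (hrs : r < s)
    (hsr : s ≤ r + b) : count (· % b = i) s = count (· % b = i) r + 1 := by
  obtain ⟨d, rfl⟩ := Nat.exists_eq_add_of_le (Nat.succ_le_of_lt hrs)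
  rw [count_add, count_succ, if_pos hr, add_eq_left]
  exact count_of_forall_not fun m hm h =>
    mod_ne_mod_of_lt_of_lt_add (k := r) (l := r + 1 + m) (by omega) (by omega) (hr.trans h.symm)

end Nat

namespace AMP

namespace Word

variable {E : Type w}

theorem isPref_inl {u l : List E} : IsPref u (.inl l) ↔ u <+: l :=
  eq_comm.trans List.prefix_iff_eq_take.symm

theorem take_inr (f : ℕ → E) (n : ℕ) : take (.inr f) n = (List.range n).map f := rfl

theorem isPref_take (W : Word E) (n : ℕ) : IsPref (take W n) W := by
  rcases W with l | f
  · exact isPref_inl.2 (List.take_prefix n l)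
  · simp [IsPref, take]

theorem IsPref.of_prefix {u v : List E} {W : Word E} (huv : u <+: v) (hv : IsPref v W) :
    IsPref u W := by
  rcases W with l | f
  · exact isPref_inl.2 (huv.trans (isPref_inl.1 hv))
  · have hu : u = v.take u.length := List.prefix_iff_eq_take.1 huv
    rw [IsPref, hu, ← hv]
    simp [take, ← List.map_take, List.take_range]

theorem eq_of_isPref_take {W W' : Word E} (h : ∀ n, IsPref (take W n) W')
    (h' : ∀ n, IsPref (take W' n) W) : W = W' := by
  rcases W with l | f <;> rcases W' with l' | g
  · have h₁ := isPref_inl.1 (h l.length)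
    have h₂ := isPref_inl.1 (h' l'.length)
    simp only [take, List.take_length] at h₁ h₂
    rw [h₁.eq_of_length (le_antisymm h₁.length_le h₂.length_le)]
  · simpa [take] using (isPref_inl.1 (h' (l.length + 1))).length_le
  · simpa [take] using (isPref_inl.1 (h (l'.length + 1))).length_le
  · congr 1
    funext n
    have hn := h (n + 1)
    simp only [IsPref, take, List.length_map, List.length_range] at hn
    simpa using (congrArg (·[n]?) hn).symm

end Word

section WProj

variable {E : Type w} (X : E → Prop)

theorem wProj_inl [DecidablePred X] (l : List E) : WProj X (.inl l) = .inl (l.filter (X ·)) := by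
  simp only [WProj]
  congr 2
  funext e
  congr

theorem filter_take_inr [DecidablePred X] (F : ℕ → E) (n : ℕ) :
    (Word.take (.inr F) n).filter (X ·) =
      (List.range (Nat.count (fun k => X (F k)) n)).map (F ∘ Nat.nth fun k => X (F k)) := by
  rw [Word.take_inr, List.filter_map, ← List.map_map]
  exact congrArg _ (Nat.filter_range_eq_map_nth (fun k => X (F k)) n)

theorem wProj_inr_of_infinite {F : ℕ → E} (hF : {n | X (F n)}.Infinite) :
    WProj X (.inr F) = .inr (F ∘ Nat.nth fun n => X (F n)) := by
  simp only [WProj, dif_pos hF]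
  rfl

theorem wProj_inr_of_finite {F : ℕ → E} (hF : {n | X (F n)}.Finite) :
    WProj X (.inr F) =
      .inl ((List.range hF.toFinset.card).map (F ∘ Nat.nth fun n => X (F n))) := by
  simp only [WProj, dif_neg (Set.not_infinite.2 hF), ← List.map_map]
  congr 2
  refine List.ext_getElem (by simp) fun j hj _ => ?_
  simp [Nat.nth_eq_getD_sort hF, List.getElem?_eq_getElem hj]

theorem isPref_filter_take_wProj [DecidablePred X] (F : ℕ → E) (n : ℕ) :
    Word.IsPref ((Word.take (.inr F) n).filter (X ·)) (WProj X (.inr F)) := by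
  rw [filter_take_inr]
  by_cases hF : {n | X (F n)}.Finite
  · rw [wProj_inr_of_finite X hF, Word.isPref_inl]
    exact (List.range_prefix_range (Nat.count_le_card hF n)).map _
  · rw [wProj_inr_of_infinite X hF]
    exact Word.isPref_take _ _

theorem exists_take_wProj_prefix_filter_take [DecidablePred X] (F : ℕ → E) (k : ℕ) :
    ∃ n, Word.take (WProj X (.inr F)) k <+: (Word.take (.inr F) n).filter (X ·) := by
  obtain ⟨j, hj, htake⟩ : ∃ j, (∀ hF : {n | X (F n)}.Finite, j ≤ hF.toFinset.card) ∧
      Word.take (WProj X (.inr F)) k = (List.range j).map (F ∘ Nat.nth fun n => X (F n)) := by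
    by_cases hF : {n | X (F n)}.Finite
    · refine ⟨min k hF.toFinset.card, fun _ => min_le_right _ _, ?_⟩
      rw [wProj_inr_of_finite X hF]
      simp [Word.take, ← List.map_take, List.take_range]
    · exact ⟨k, fun h => absurd h hF, by rw [wProj_inr_of_infinite X hF]; rfl⟩
  obtain ⟨n, hn⟩ := Nat.exists_le_count hj
  exact ⟨n, by rw [htake, filter_take_inr]; exact (List.range_prefix_range hn).map _⟩

theorem wProj_inr_eq_of_cofinal [DecidablePred X] {F G : ℕ → E}
    (hFG : ∀ n, ∃ m, (Word.take (.inr F) n).filter (X ·) <+: (Word.take (.inr G) m).filter (X ·))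
    (hGF : ∀ n, ∃ m, (Word.take (.inr G) n).filter (X ·) <+: (Word.take (.inr F) m).filter (X ·)) :
    WProj X (.inr F) = WProj X (.inr G) := by
  refine Word.eq_of_isPref_take (fun k => ?_) (fun k => ?_)
  · obtain ⟨n, hn⟩ := exists_take_wProj_prefix_filter_take X F k
    obtain ⟨m, hm⟩ := hFG n
    exact (isPref_filter_take_wProj X G m).of_prefix (hn.trans hm)
  · obtain ⟨n, hn⟩ := exists_take_wProj_prefix_filter_take X G k
    obtain ⟨m, hm⟩ := hGF n
    exact (isPref_filter_take_wProj X F m).of_prefix (hn.trans hm)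

end WProj

section Channel

variable {P : Type u} {V : Type v} [DecidableEq P]

instance Ev.decidableActive {Q : Type u} [DecidableEq Q] (r : Q) :
    DecidablePred (Ev.Active (V := V) r)
  | .send p _ _ => inferInstanceAs (Decidable (p = r))
  | .recv _ q _ => inferInstanceAs (Decidable (q = r))

@[simp]
theorem sendMsgs_append (p q : P) (u v : List (Ev P V)) :
    sendMsgs p q (u ++ v) = sendMsgs p q u ++ sendMsgs p q v :=
  List.filterMap_append

@[simp]
theorem recvMsgs_append (p q : P) (u v : List (Ev P V)) :
    recvMsgs p q (u ++ v) = recvMsgs p q u ++ recvMsgs p q v :=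
  List.filterMap_append

@[simp]
theorem sendMsgs_nil (p q : P) : sendMsgs p q ([] : List (Ev P V)) = [] := rfl

@[simp]
theorem recvMsgs_nil (p q : P) : recvMsgs p q ([] : List (Ev P V)) = [] := rfl

@[simp]
theorem sendMsgs_cons_send (p q p' q' : P) (m : V) (u : List (Ev P V)) :
    sendMsgs p q (.send p' q' m :: u) =
      if p' = p ∧ q' = q then m :: sendMsgs p q u else sendMsgs p q u := by
  by_cases h : p' = p ∧ q' = q <;> simp [sendMsgs, h]

@[simp]
theorem sendMsgs_cons_recv (p q p' q' : P) (m : V) (u : List (Ev P V)) :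
    sendMsgs p q (.recv p' q' m :: u) = sendMsgs p q u := rfl

@[simp]
theorem recvMsgs_cons_recv (p q p' q' : P) (m : V) (u : List (Ev P V)) :
    recvMsgs p q (.recv p' q' m :: u) =
      if p' = p ∧ q' = q then m :: recvMsgs p q u else recvMsgs p q u := by
  by_cases h : p' = p ∧ q' = q <;> simp [recvMsgs, h]

@[simp]
theorem recvMsgs_cons_send (p q p' q' : P) (m : V) (u : List (Ev P V)) :
    recvMsgs p q (.send p' q' m :: u) = recvMsgs p q u := rfl

theorem Swap.sendMsgs_eq {u v : List (Ev P V)} (h : Swap u v) (p q : P) :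
    sendMsgs p q u = sendMsgs p q v := by
  cases h <;> grind [sendMsgs_append, sendMsgs_cons_send, sendMsgs_cons_recv]

theorem Swap.recvMsgs_eq {u v : List (Ev P V)} (h : Swap u v) (p q : P) :
    recvMsgs p q u = recvMsgs p q v := by
  cases h <;> grind [recvMsgs_append, recvMsgs_cons_send, recvMsgs_cons_recv]

theorem Indist.sendMsgs_eq {u v : List (Ev P V)} (h : Indist u v) (p q : P) :
    sendMsgs p q u = sendMsgs p q v := by
  induction h with
  | of h => exact h.sendMsgs_eq p q
  | refl => rfl
  | symm _ ih => exact ih.symm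
  | trans _ _ ih₁ ih₂ => exact ih₁.trans ih₂

theorem Indist.recvMsgs_eq {u v : List (Ev P V)} (h : Indist u v) (p q : P) :
    recvMsgs p q u = recvMsgs p q v := by
  induction h with
  | of h => exact h.recvMsgs_eq p q
  | refl => rfl
  | symm _ ih => exact ih.symm
  | trans _ _ ih₁ ih₂ => exact ih₁.trans ih₂

theorem IPref.sendMsgs_prefix {u v : List (Ev P V)} (h : IPref u v) (p q : P) :
    sendMsgs p q u <+: sendMsgs p q v := by
  obtain ⟨x, hx⟩ := h
  exact ⟨sendMsgs p q x, by rw [← sendMsgs_append, hx.sendMsgs_eq]⟩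

theorem IPref.recvMsgs_prefix {u v : List (Ev P V)} (h : IPref u v) (p q : P) :
    recvMsgs p q u <+: recvMsgs p q v := by
  obtain ⟨x, hx⟩ := h
  exact ⟨recvMsgs p q x, by rw [← recvMsgs_append, hx.recvMsgs_eq]⟩

variable (B : P → P → Option ℕ)

theorem encList_append (u v : List (Ev P V)) (σ ρ : P → P → ℕ) :
    encList B σ ρ (u ++ v) =
      encList B σ ρ u ++ encList B (u.foldl (bumpS B) σ) (u.foldl (bumpR B) ρ) v := by
  induction u generalizing σ ρ with
  | nil => rfl
  | cons e u ih => simp [encList, ih]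

theorem encList_singleton (σ ρ : P → P → ℕ) (e : Ev P V) : encList B σ ρ [e] = encEv B σ ρ e :=
  List.append_nil _

theorem encList_prefix {u v : List (Ev P V)} (h : u <+: v) (σ ρ : P → P → ℕ) :
    encList B σ ρ u <+: encList B σ ρ v := by
  obtain ⟨x, rfl⟩ := h
  rw [encList_append]
  exact List.prefix_append _ _

theorem length_le_length_encList (v : List (Ev P V)) (σ ρ : P → P → ℕ) :
    v.length ≤ (encList B σ ρ v).length := by
  induction v generalizing σ ρ with
  | nil => simp
  | cons e v ih =>
    have : 1 ≤ (encEv B σ ρ e).length := by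
      cases e <;> simp only [encEv] <;> split <;> simp
    simp only [encList, List.length_cons, List.length_append]
    linarith [ih (bumpS B σ e) (bumpR B ρ e)]

variable {B}

theorem foldl_bumpS_apply {p q : P} (hB : (B p q).isSome) (u : List (Ev P V)) (σ : P → P → ℕ) :
    u.foldl (bumpS B) σ p q = σ p q + (sendMsgs p q u).length := by
  induction u generalizing σ with
  | nil => simp
  | cons e u ih =>
    rw [List.foldl_cons, ih]
    cases e with
    | send p' q' m =>
      by_cases h : p' = p ∧ q' = q
      · obtain ⟨rfl, rfl⟩ := h
        simp only [bumpS, hB, ↓reduceIte, upd2, and_self, sendMsgs_cons_send, List.length_cons]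
        omega
      · have : ¬(p = p' ∧ q = q') := fun h' => h ⟨h'.1.symm, h'.2.symm⟩
        simp only [bumpS, sendMsgs_cons_send, if_neg h]
        split <;> simp [upd2, this]
    | recv => simp [bumpS]

theorem foldl_bumpR_apply {p q : P} (hB : (B p q).isSome) (u : List (Ev P V)) (ρ : P → P → ℕ) :
    u.foldl (bumpR B) ρ p q = ρ p q + (recvMsgs p q u).length := by
  induction u generalizing ρ with
  | nil => simp
  | cons e u ih =>
    rw [List.foldl_cons, ih]
    cases e with
    | recv p' q' m =>
      by_cases h : p' = p ∧ q' = q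
      · obtain ⟨rfl, rfl⟩ := h
        simp only [bumpR, hB, ↓reduceIte, upd2, and_self, recvMsgs_cons_recv, List.length_cons]
        omega
      · have : ¬(p = p' ∧ q = q') := fun h' => h ⟨h'.1.symm, h'.2.symm⟩
        simp only [bumpR, recvMsgs_cons_recv, if_neg h]
        split <;> simp [upd2, this]
    | send => simp [bumpR]

end Channel

section ChannelParticipant

variable {P : Type u} {V : Type v} [DecidableEq P]

def chanIn (p q : P) (i : ℕ) (m : V) : Ev (PCh P) V := .recv (.inl p) (.inr (p, q, i)) m

def chanOut (p q : P) (i : ℕ) (m : V) : Ev (PCh P) V := .send (.inr (p, q, i)) (.inl q) m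

def chanTrace (p q : P) (b i : ℕ) (u : List (Ev P V)) : List (Ev (PCh P) V) :=
  List.alternate ((List.sublistMod b i 0 (sendMsgs p q u)).map (chanIn p q i))
    ((List.sublistMod b i 0 (recvMsgs p q u)).map (chanOut p q i))

def PendingWithin (p q : P) (b : ℕ) (u : List (Ev P V)) : Prop :=
  (recvMsgs p q u).length ≤ (sendMsgs p q u).length ∧
    (sendMsgs p q u).length ≤ (recvMsgs p q u).length + b

theorem filter_encEv {B : P → P → Option ℕ} {p q : P} {b : ℕ} (hB : B p q = some b) (i : ℕ)
    (σ ρ : P → P → ℕ) (e : Ev P V) :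
    (encEv B σ ρ e).filter (Ev.Active (.inr (p, q, i) : PCh P) ·) =
      (List.sublistMod b i (σ p q) (sendMsgs p q [e])).map (chanIn p q i) ++
        (List.sublistMod b i (ρ p q) (recvMsgs p q [e])).map (chanOut p q i) := by
  cases e with
  | send p' q' m =>
    by_cases h : p' = p ∧ q' = q
    · obtain ⟨rfl, rfl⟩ := h
      by_cases hi : σ p' q' % b = i <;>
        simp [encEv, hB, Ev.Active, List.sublistMod_singleton, hi, chanIn]
    · cases hB' : B p' q' <;> simp +contextual [encEv, hB', Ev.Active, h, not_and.1 h]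
  | recv p' q' m =>
    by_cases h : p' = p ∧ q' = q
    · obtain ⟨rfl, rfl⟩ := h
      by_cases hi : ρ p' q' % b = i <;>
        simp [encEv, hB, Ev.Active, List.sublistMod_singleton, hi, chanOut]
    · cases hB' : B p' q' <;> simp +contextual [encEv, hB', Ev.Active, h, not_and.1 h]

theorem chanTrace_prefix_of_iPref (p q : P) (b i : ℕ) {u v : List (Ev P V)} (h : IPref u v) :
    chanTrace p q b i u <+: chanTrace p q b i v :=
  List.alternate_prefix ((List.sublistMod_prefix _ _ _ (h.sendMsgs_prefix p q)).map _)
    ((List.sublistMod_prefix _ _ _ (h.recvMsgs_prefix p q)).map _)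

theorem chanTrace_append_singleton {p q : P} {b : ℕ} (i : ℕ) {v : List (Ev P V)} {e : Ev P V}
    (hv : PendingWithin p q b v) (hve : PendingWithin p q b (v ++ [e])) :
    chanTrace p q b i (v ++ [e]) = chanTrace p q b i v ++
      ((List.sublistMod b i (sendMsgs p q v).length (sendMsgs p q [e])).map (chanIn p q i) ++
        (List.sublistMod b i (recvMsgs p q v).length (recvMsgs p q [e])).map (chanOut p q i)) := by
  cases e with
  | send p' q' m =>
    by_cases h : p' = p ∧ q' = q
    · obtain ⟨rfl, rfl⟩ := h
      simp only [chanTrace, sendMsgs_append, recvMsgs_append, sendMsgs_cons_send, and_self,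
        if_true, recvMsgs_cons_send, sendMsgs_nil, recvMsgs_nil, List.append_nil,
        List.sublistMod_append, List.sublistMod_nil, List.map_append, List.map_nil, zero_add]
      by_cases hi : (sendMsgs p' q' v).length % b = i
      · rw [List.sublistMod_singleton, if_pos hi, List.map_singleton,
          List.alternate_append_singleton_left]
        rw [List.length_map, List.length_map, List.length_sublistMod, List.length_sublistMod]
        exact Nat.count_mod_eq_of_le_of_lt_add hi hv.1 (by simpa [PendingWithin] using hve.2)
      · simp [List.sublistMod_singleton, hi]
    · simp [chanTrace, h]
  | recv p' q' m =>
    by_cases h : p' = p ∧ q' = q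
    · obtain ⟨rfl, rfl⟩ := h
      simp only [chanTrace, sendMsgs_append, recvMsgs_append, recvMsgs_cons_recv, and_self,
        if_true, sendMsgs_cons_recv, sendMsgs_nil, recvMsgs_nil, List.append_nil, List.nil_append,
        List.sublistMod_append, List.sublistMod_nil, List.map_append, List.map_nil, zero_add]
      by_cases hi : (recvMsgs p' q' v).length % b = i
      · rw [List.sublistMod_singleton, if_pos hi, List.map_singleton,
          List.alternate_append_singleton_right]
        rw [List.length_map, List.length_map, List.length_sublistMod, List.length_sublistMod]
        exact Nat.count_mod_eq_succ_of_lt_of_le_add hi (by simpa [PendingWithin] using hve.1) hv.2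
      · simp [List.sublistMod_singleton, hi]
    · simp [chanTrace, h]

theorem filter_encList_eq_chanTrace {B : P → P → Option ℕ} {p q : P} {b : ℕ} (hB : B p q = some b)
    (i : ℕ) {v : List (Ev P V)} (hv : ∀ u, u <+: v → PendingWithin p q b u) :
    (encList B (fun _ _ => 0) (fun _ _ => 0) v).filter (Ev.Active (.inr (p, q, i) : PCh P) ·) =
      chanTrace p q b i v := by
  induction v using List.reverseRecOn with
  | nil => rfl
  | append_singleton v e ih =>
    have hB' : (B p q).isSome := by simp [hB]
    rw [encList_append, List.filter_append,
      ih fun u hu => hv u (hu.trans (List.prefix_append _ _)), encList_singleton, filter_encEv hB,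
      foldl_bumpS_apply hB', foldl_bumpR_apply hB', zero_add, zero_add,
      chanTrace_append_singleton i (hv v (List.prefix_append _ _)) (hv _ (List.prefix_refl _))]

theorem pendingWithin_of_isPref {B : P → P → Option ℕ} {w : Word (Ev P V)}
    (hc : ChanCompliant w) (hw : RespectsBw B w) {p q : P} {b : ℕ} (hB : B p q = some b)
    {u : List (Ev P V)} (hu : Word.IsPref u w) :
    PendingWithin p q b u := by
  rw [← hu]
  exact ⟨(hc _ p q).length_le, hw p q b hB _⟩

theorem Indist.chanTrace_eq {u v : List (Ev P V)} (h : Indist u v) (p q : P) (b i : ℕ) :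
    chanTrace p q b i u = chanTrace p q b i v := by
  rw [chanTrace, chanTrace, h.sendMsgs_eq, h.recvMsgs_eq]

end ChannelParticipant

section InfiniteWords

variable {P : Type u} {V : Type v} [DecidableEq P] (B : P → P → Option ℕ)

theorem take_encWord_inr (f : ℕ → Ev P V) {N n : ℕ}
    (hN : N ≤ (encList B (fun _ _ => 0) (fun _ _ => 0) ((List.range n).map f)).length) :
    Word.take (encWord B (.inr f)) N =
      (encList B (fun _ _ => 0) (fun _ _ => 0) ((List.range n).map f)).take N := by
  have hE : ∀ {n m}, n ≤ m → encList B (fun _ _ => 0) (fun _ _ => 0) ((List.range n).map f) <+: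
      encList B (fun _ _ => 0) (fun _ _ => 0) ((List.range m).map f) := fun h =>
    encList_prefix B ((List.range_prefix_range h).map f) _ _
  have hlen : ∀ n, n ≤ (encList B (fun _ _ => 0) (fun _ _ => 0) ((List.range n).map f)).length :=
    fun n => by simpa using length_le_length_encList B ((List.range n).map f) _ _
  refine List.ext_getElem (by simp [Word.take, encWord]; omega) fun j _ _ => ?_
  simp only [encWord, Word.take, List.getElem_map, List.getElem_range, List.getElem_take]
  rw [List.getD_eq_getElem _ _ (hlen (j + 1)), (hE (le_max_left (j + 1) n)).getElem,
    (hE (le_max_right (j + 1) n)).getElem]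

theorem take_encWord_inr_prefix (f : ℕ → Ev P V) (n : ℕ) :
    Word.take (encWord B (.inr f)) n <+:
      encList B (fun _ _ => 0) (fun _ _ => 0) ((List.range n).map f) := by
  rw [take_encWord_inr B f (by simpa using length_le_length_encList B ((List.range n).map f) _ _)]
  exact List.take_prefix _ _

theorem encList_range_map_eq_take_encWord (f : ℕ → Ev P V) (n : ℕ) :
    encList B (fun _ _ => 0) (fun _ _ => 0) ((List.range n).map f) =
      Word.take (encWord B (.inr f))
        (encList B (fun _ _ => 0) (fun _ _ => 0) ((List.range n).map f)).length := by
  rw [take_encWord_inr B f le_rfl, List.take_length]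

variable {B}

theorem filter_take_encWord_cofinal {p q : P} {b : ℕ} (hB : B p q = some b) (i : ℕ)
    {f g : ℕ → Ev P V} (hf : ∀ u, Word.IsPref u (.inr f) → PendingWithin p q b u)
    (hg : ∀ u, Word.IsPref u (.inr g) → PendingWithin p q b u) (hfg : IPrefW f g) (n : ℕ) :
    ∃ m, (Word.take (encWord B (.inr f)) n).filter (Ev.Active (.inr (p, q, i) : PCh P) ·) <+:
      (Word.take (encWord B (.inr g)) m).filter (Ev.Active (.inr (p, q, i) : PCh P) ·) := by
  obtain ⟨m, hm⟩ := hfg n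
  have hf' : ∀ u, u <+: (List.range n).map f → PendingWithin p q b u := fun u hu =>
    hf u ((Word.isPref_take (.inr f) n).of_prefix hu)
  have hg' : ∀ u, u <+: (List.range m).map g → PendingWithin p q b u := fun u hu =>
    hg u ((Word.isPref_take (.inr g) m).of_prefix hu)
  refine ⟨(encList B (fun _ _ => 0) (fun _ _ => 0) ((List.range m).map g)).length, ?_⟩
  rw [← encList_range_map_eq_take_encWord B g m, filter_encList_eq_chanTrace hB i hg']
  refine ((take_encWord_inr_prefix B f n).filter _).trans ?_
  rw [filter_encList_eq_chanTrace hB i hf']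
  exact chanTrace_prefix_of_iPref p q b i hm

end InfiniteWords

theorem enc_proj_channel_participant_agree_general {P : Type} {V : Type}
    [DecidableEq P]
    (B : P → P → Option ℕ) (w u : Word (Ev P V))
    (hwc : ChanCompliant w) (huc : ChanCompliant u)
    (hwB : RespectsBw B w) (huB : RespectsBw B u)
    (h : WIndist w u) :
    ∀ (p q : P) (b i : ℕ), B p q = some b → i < b →
      WProj (Ev.Active (Sum.inr (p, q, i) : PCh P)) (encWord B w) =
      WProj (Ev.Active (Sum.inr (p, q, i) : PCh P)) (encWord B u) := by
  intro p q b i hB _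
  have hw := fun v (hv : Word.IsPref v w) => pendingWithin_of_isPref hwc hwB hB hv
  have hu := fun v (hv : Word.IsPref v u) => pendingWithin_of_isPref huc huB hB hv
  rcases w with w | f <;> rcases u with u | g
  · simp only [encWord, wProj_inl]
    rw [filter_encList_eq_chanTrace hB i fun v hv => hw v (Word.isPref_inl.2 hv),
      filter_encList_eq_chanTrace hB i fun v hv => hu v (Word.isPref_inl.2 hv),
      Indist.chanTrace_eq h]
  · exact h.elim
  · exact h.elim
  · exact wProj_inr_eq_of_cofinal _ (filter_take_encWord_cofinal hB i hw hu h.1)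
      (filter_take_encWord_cofinal hB i hu hw h.2)

/-- For channel-compliant words `w ≈ u` respecting the channel
bounds `B`, the projections of the encoded words onto the events of any channel
participant `⟨p,q,i⟩` agree. -/
theorem enc_proj_channel_participant_agree {P : Type} {V : Type}
    [Fintype P] [DecidableEq P] [Fintype V] [DecidableEq V]
    (B : P → P → Option ℕ) (w u : Word (Ev P V))
    (hwc : ChanCompliant w) (huc : ChanCompliant u)
    (hwB : RespectsBw B w) (huB : RespectsBw B u)
    (h : WIndist w u) :
    ∀ (p q : P) (b i : ℕ), B p q = some b → i < b →
      WProj (Ev.Active (Sum.inr (p, q, i) : PCh P)) (encWord B w) =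
      WProj (Ev.Active (Sum.inr (p, q, i) : PCh P)) (encWord B u) :=
  enc_proj_channel_participant_agree_general B w u hwc huc hwB huB h

end AMP
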